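/- Neither the sequence 010101… nor the sequence 101010… belongs to the Thue-Morse subshift 𝕂. -/

import Mathlib

/-!
Since `tm (2k) = tm k` and `tm (2k+1) = !tm k`, the pair at positions `2k, 2k+1` is never
constant, so `tm` has no three equal consecutive values; and `tm (2j+1) ≠ tm (2j+2)` forces
`tm j = tm (j+1)`. An alternating window of length five contains two such pairs `2j+1, 2j+2` and
`2j+3, 2j+4`, hence `tm j = tm (j+1) = tm (j+2)`, which is impossible. Having a length-five
alternating prefix is an open condition, so it fails on the whole orbit closure `TMK`.
-/

open Filter Topology MeasureTheory

/-- The left shift on the full 2-shift `Σ = {0,1}^ℕ`. -/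
def shift (x : ℕ → Bool) : ℕ → Bool := fun n => x (n + 1)

/-- The Thue–Morse substitution `H : 0 → 01, 1 → 10`, acting on sequences. -/
def subH (x : ℕ → Bool) : ℕ → Bool :=
  fun n => if n % 2 = 0 then x (n / 2) else !x (n / 2)

/-- The Thue–Morse sequence: `tm n` is the parity of the number of 1s in
the binary expansion of `n`. -/
def tm (n : ℕ) : Bool := (Nat.digits 2 n).count 1 % 2 == 1

/-- The fixed point of `subH` starting with 0. -/
def rho0 : ℕ → Bool := tm

/-- The fixed point of `subH` starting with 1. -/
def rho1 : ℕ → Bool := fun n => !tm n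

/-- `rhoB b` is the fixed point of `subH` starting with digit `b`. -/
def rhoB : Bool → ℕ → Bool
  | false => rho0
  | true => rho1

/-- The digit-flipping involution. -/
def flipSeq (x : ℕ → Bool) : ℕ → Bool := fun n => !x n

/-- Prepend a digit to a sequence. -/
def consTM (a : Bool) (x : ℕ → Bool) : ℕ → Bool
  | 0 => a
  | n + 1 => x n

/-- The Thue–Morse subshift: the closure of the shift orbit of `rho0`. -/
def TMK : Set (ℕ → Bool) := closure {y | ∃ n, y = shift^[n] rho0}

/-- The renormalization operator `𝓡V = V ∘ σ ∘ H + V ∘ H`. -/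
def RenOp (V : (ℕ → Bool) → ℝ) : (ℕ → Bool) → ℝ :=
  fun x => V (shift (subH x)) + V (subH x)

/-- The Birkhoff sum `S_k V = ∑_{i<k} V ∘ σⁱ`. -/
def birkhoff (V : (ℕ → Bool) → ℝ) (k : ℕ) (x : ℕ → Bool) : ℝ :=
  ∑ i ∈ Finset.range k, V (shift^[i] x)

/-- The potential `U_c`: value `c` on `[01]`, `-c` on `[10]`, `0` on `[00] ∪ [11]`. -/
def Upot (c : ℝ) (x : ℕ → Bool) : ℝ :=
  if x 0 = false ∧ x 1 = true then c
  else if x 0 = true ∧ x 1 = false then -c else 0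

/-- The sliding block code `π(x)_k = 1` iff `x_k ≠ x_{k+1}`. -/
def piTM (x : ℕ → Bool) : ℕ → Bool := fun n => x n != x (n + 1)

/-- The Feigenbaum substitution `0 → 11, 1 → 10`, acting on sequences. -/
def subHfeig (x : ℕ → Bool) : ℕ → Bool :=
  fun n => if n % 2 = 0 then true else !x (n / 2)

lemma shift_iterate_apply (x : ℕ → Bool) (n k : ℕ) : shift^[n] x k = x (n + k) := by
  induction n generalizing x with
  | zero => simp
  | succ m ih =>
    rw [Function.iterate_succ_apply, ih]
    simp only [shift]
    congr 1
    omega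

lemma tm_two_mul (k : ℕ) : tm (2 * k) = tm k := by
  rcases Nat.eq_zero_or_pos k with rfl | hk
  · rfl
  · unfold tm
    rw [Nat.digits_def' (by norm_num) (by omega), Nat.mul_mod_right,
      Nat.mul_div_cancel_left _ (by norm_num)]
    simp

lemma tm_two_mul_add_one (k : ℕ) : tm (2 * k + 1) = !tm k := by
  unfold tm
  rw [Nat.digits_def' (by norm_num) (by omega), show (2 * k + 1) % 2 = 1 by omega,
    show (2 * k + 1) / 2 = k by omega, List.count_cons_self]
  rcases Nat.mod_two_eq_zero_or_one ((Nat.digits 2 k).count 1) with h | h <;>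
    simp [Nat.add_mod, h]

lemma tm_two_mul_ne (k : ℕ) : tm (2 * k) ≠ tm (2 * k + 1) := by
  rw [tm_two_mul, tm_two_mul_add_one]
  exact Bool.self_ne_not _

lemma tm_two_mul_add_one_ne_iff (j : ℕ) : tm (2 * j + 1) ≠ tm (2 * j + 2) ↔ tm j = tm (j + 1) := by
  rw [tm_two_mul_add_one, show 2 * j + 2 = 2 * (j + 1) by ring, tm_two_mul]
  cases tm j <;> cases tm (j + 1) <;> decide

lemma tm_not_three_eq (m : ℕ) : ¬(tm m = tm (m + 1) ∧ tm (m + 1) = tm (m + 2)) := by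
  rintro ⟨h₀, h₁⟩
  obtain ⟨k, rfl | rfl⟩ := Nat.even_or_odd' m
  · exact tm_two_mul_ne k h₀
  · exact tm_two_mul_ne (k + 1) h₁

lemma tm_not_alternating (n : ℕ) : ¬∀ i : Fin 4, tm (n + i) ≠ tm (n + i + 1) := by
  intro h
  set j := n / 2
  -- the window `n, …, n + 4` contains both pairs `2j+1, 2j+2` and `2j+3, 2j+4`
  have alt : ∀ m, n ≤ m → m < n + 4 → tm m ≠ tm (m + 1) := fun m hnm hm => by
    simpa [show n + (m - n) = m by omega] using h ⟨m - n, by omega⟩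
  refine tm_not_three_eq j ⟨?_, ?_⟩
  · exact (tm_two_mul_add_one_ne_iff j).1 (alt _ (by omega) (by omega))
  · exact (tm_two_mul_add_one_ne_iff (j + 1)).1 (alt _ (by omega) (by omega))

lemma TMK_subset_not_alternating : TMK ⊆ {x : ℕ → Bool | ¬∀ i : Fin 4, x i ≠ x (i + 1)} := by
  refine closure_minimal ?_ (isOpen_compl_iff.1 ?_)
  · rintro _ ⟨n, rfl⟩
    simpa only [Set.mem_ofPred_eq, shift_iterate_apply, rho0, add_assoc] using tm_not_alternating n
  · simp only [Set.compl_ofPred, not_not, Set.ofPred_forall]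
    exact isOpen_iInter_of_finite fun i =>
      isOpen_ne_fun (continuous_apply _) (continuous_apply _)

/-- neither `0101…` nor `1010…` belongs to the Thue-Morse subshift. -/
theorem stmt6 :
    (fun n : ℕ => decide (n % 2 = 1)) ∉ TMK ∧
    (fun n : ℕ => decide (n % 2 = 0)) ∉ TMK :=
  ⟨fun h => TMK_subset_not_alternating h (by decide),
    fun h => TMK_subset_not_alternating h (by decide)⟩
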